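/- Let W ⊆ ℝ^n be a linear subspace and c, d, d̃ ∈ ℝ^n. Suppose (x̃, s) is an optimal solution to Primal-Dual(W, d̃, c), and suppose the primal program of Primal-Dual(W,d,c) is feasible. Let R := {i ∈ {1,…,n} : x̃_i > (κ_W + 1)‖d − d̃‖₁}. Then every dual optimal solution s* to Primal-Dual(W,d,c) (that is, every s* ∈ W^⊥ + c with s* ≥ 0 maximizing ⟨d, c−s⟩ over the dual feasible set) satisfies s*_R = 0. -/

import Mathlib

/-!
Suppose `sstar i > 0` although `xt i > (κ_W + 1) ‖d - dt‖₁ ≥ 0`. Complementary slackness gives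
`s i = 0`, so `y := sstar - s ∈ W^⊥` has `y i > 0`; let `h` be an elementary vector of `W^⊥`
sign-consistent with `y` and with `h i > 0`. Moving `sstar` along `-h` stays dual feasible, so
dual optimality forces `⟨d, h⟩ ≤ 0`. Where `h < 0` we have `s > 0`, hence `xt = 0`, so
`xt i * h i ≤ ⟨xt, h⟩ = ⟨dt, h⟩ ≤ ⟨dt - d, h⟩`. Finally an exchange argument against the circuits
of `W` bounds every `|h j|` by `κ_W * h i`, whence `xt i ≤ κ_W ‖d - dt‖₁`, a contradiction.
-/

open scoped BigOperators

variable {ι : Type*} [Fintype ι] [DecidableEq ι]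

/-- The ℓ₁ norm of a vector. -/
noncomputable def norm1 (x : ι → ℝ) : ℝ := ∑ i, |x i|

/-- The ℓ∞ norm of a vector. -/
noncomputable def normInf (x : ι → ℝ) : ℝ := ⨆ i, |x i|

/-- The ℓ₂ norm of a vector. -/
noncomputable def norm2 (x : ι → ℝ) : ℝ := Real.sqrt (∑ i, (x i) ^ 2)

/-- The componentwise negative part `max (-x) 0`. -/
noncomputable def vneg (x : ι → ℝ) : ι → ℝ := fun i => max (-(x i)) 0

/-- The componentwise positive part `max x 0`. -/
noncomputable def vpos (x : ι → ℝ) : ι → ℝ := fun i => max (x i) 0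

/-- `y` is sign-consistent with `x`. -/
def SignConsistent (y x : ι → ℝ) : Prop :=
  (∀ i, 0 ≤ x i * y i) ∧ ∀ i, x i = 0 → y i = 0

/-- The subspace `ℝ^n_C` of vectors supported on `C`. -/
def coordSubspace (C : Set ι) : Submodule ℝ (ι → ℝ) where
  carrier := {x | ∀ i ∉ C, x i = 0}
  zero_mem' := by intro i _; rfl
  add_mem' := by intro a b ha hb i hi; simp [ha i hi, hb i hi]
  smul_mem' := by intro c a ha i hi; simp [ha i hi]

/-- `C` is a circuit of the subspace `W`: `W ∩ ℝ^n_C` is one-dimensional and no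
strict subset of `C` has this property. -/
def IsCircuit (W : Submodule ℝ (ι → ℝ)) (C : Set ι) : Prop :=
  Module.finrank ℝ ↥(W ⊓ coordSubspace C) = 1 ∧
  ∀ C' : Set ι, C' ⊂ C → Module.finrank ℝ ↥(W ⊓ coordSubspace C') ≠ 1

/-- The circuit imbalance measure `κ_W`. -/
noncomputable def kappa (W : Submodule ℝ (ι → ℝ)) : ℝ :=
  sSup ({1} ∪ {r | ∃ C : Set ι, IsCircuit W C ∧ ∃ g ∈ W, g ≠ 0 ∧ {i | g i ≠ 0} = C ∧
    r = sSup ((fun i => |g i|) '' C) / sInf ((fun i => |g i|) '' C)})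

/-- The matroidal closure of `K` with respect to `W`. -/
def clos (W : Submodule ℝ (ι → ℝ)) (K : Set ι) : Set ι :=
  K ∪ {j | j ∉ K ∧ ∃ C : Set ι, IsCircuit W C ∧ j ∈ C ∧ C ⊆ K ∪ {j}}

/-- `z` is the minimum-norm lift `L_I^W(p)` of `p` to `W`:
`z ∈ W`, `z` agrees with `p` on `I`, and `z` has minimum ℓ₂-norm among such vectors. -/
def IsMinLift (W : Submodule ℝ (ι → ℝ)) (I : Finset ι) (p z : ι → ℝ) : Prop :=
  z ∈ W ∧ (∀ i ∈ I, z i = p i) ∧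
  ∀ z' ∈ W, (∀ i ∈ I, z' i = p i) → norm2 z ≤ norm2 z'

/-- The ℓ₂→ℓ₂ operator norm of the lifting map `L_I^W` on `π_I(W)`. -/
noncomputable def liftOpNorm (W : Submodule ℝ (ι → ℝ)) (I : Finset ι) : ℝ :=
  sSup {r | ∃ p z, IsMinLift W I p z ∧ r = norm2 z / Real.sqrt (∑ i ∈ I, (p i) ^ 2)}

/-- The condition number `χ̄_W = max{‖L_I^W‖ : ∅ ≠ I}`. -/
noncomputable def chiBar (W : Submodule ℝ (ι → ℝ)) : ℝ :=
  sSup {r | ∃ I : Finset ι, I.Nonempty ∧ r = liftOpNorm W I}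

/-- The orthogonal complement of `W` in `ℝ^n`. -/
def orthComp (W : Submodule ℝ (ι → ℝ)) : Submodule ℝ (ι → ℝ) where
  carrier := {y | ∀ x ∈ W, ∑ i, x i * y i = 0}
  zero_mem' := by intro x hx; simp
  add_mem' := by
    intro a b ha hb x hx
    simpa [mul_add, Finset.sum_add_distrib, ha x hx] using hb x hx
  smul_mem' := by
    intro c a ha x hx
    have h := ha x hx
    have : ∑ i, x i * (c • a) i = c * ∑ i, x i * a i := by
      rw [Finset.mul_sum]
      refine Finset.sum_congr rfl fun i _ => ?_
      simp [Pi.smul_apply, smul_eq_mul]; ring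
    simpa [this, h]

/-- `x` is a feasible solution to the primal program of Primal-Dual(W,d,c). -/
def PrimalFeasible (W : Submodule ℝ (ι → ℝ)) (d x : ι → ℝ) : Prop :=
  x - d ∈ W ∧ ∀ i, 0 ≤ x i

/-- `s` is a feasible solution to the dual program of Primal-Dual(W,d,c). -/
def DualFeasible (W : Submodule ℝ (ι → ℝ)) (c s : ι → ℝ) : Prop :=
  s - c ∈ orthComp W ∧ ∀ i, 0 ≤ s i

/-- `(x,s)` is an optimal solution to Primal-Dual(W,d,c): both feasible and `⟨x,s⟩ = 0`. -/
def IsOptimalPair (W : Submodule ℝ (ι → ℝ)) (d c x s : ι → ℝ) : Prop :=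
  PrimalFeasible W d x ∧ DualFeasible W c s ∧ ∑ i, x i * s i = 0

/-- The ℓ₂→ℓ₂ operator norm of a matrix. -/
noncomputable def l2OpNorm {m n : Type*} [Fintype m] [Fintype n] [DecidableEq n]
    (A : Matrix m n ℝ) : ℝ :=
  ‖LinearMap.toContinuousLinearMap (Matrix.toEuclideanLin A)‖

/-- The max-norm (largest absolute value of an entry) of a matrix. -/
noncomputable def matMaxNorm {m n : Type*} [Fintype m] [Fintype n] (A : Matrix m n ℝ) : ℝ :=
  ⨆ i, ⨆ j, |A i j|

open Function

omit [Fintype ι] [DecidableEq ι]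

def IsElementary (U : Submodule ℝ (ι → ℝ)) (h : ι → ℝ) : Prop :=
  h ∈ U ∧ h ≠ 0 ∧ ∀ g ∈ U, g ≠ 0 → support g ⊆ support h → support g = support h

namespace SignConsistent

theorem refl (x : ι → ℝ) : SignConsistent x x :=
  ⟨fun i => mul_self_nonneg (x i), fun _ hi => hi⟩

theorem support_subset {x y : ι → ℝ} (h : SignConsistent y x) : support y ⊆ support x :=
  fun i hy hx => hy (h.2 i hx)

theorem pos_of_pos {x y : ι → ℝ} (h : SignConsistent y x) {i : ι} (hy : 0 < y i) : 0 < x i := by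
  have := h.1 i
  rcases (h.support_subset hy.ne').lt_or_gt with hx | hx
  · nlinarith
  · exact hx

theorem neg_of_neg {x y : ι → ℝ} (h : SignConsistent y x) {i : ι} (hy : y i < 0) : x i < 0 := by
  have := h.1 i
  rcases (h.support_subset hy.ne).lt_or_gt with hx | hx
  · exact hx
  · nlinarith

theorem trans {x y z : ι → ℝ} (hzy : SignConsistent z y) (hyx : SignConsistent y x) :
    SignConsistent z x := by
  refine ⟨fun i => ?_, fun i hx => hzy.2 i (hyx.2 i hx)⟩
  rcases eq_or_ne (y i) 0 with hy | hy
  · simp [hzy.2 i hy]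
  · have key : 0 ≤ (x i * y i) * (y i * z i) := mul_nonneg (hyx.1 i) (hzy.1 i)
    have hy2 : 0 < y i * y i := mul_self_pos.2 hy
    nlinarith

end SignConsistent

theorem mem_coordSubspace_iff_support_subset {C : Set ι} {x : ι → ℝ} :
    x ∈ coordSubspace C ↔ support x ⊆ C :=
  support_subset_iff'.symm

theorem IsElementary.eq_smul_of_support_subset {U : Submodule ℝ (ι → ℝ)} {h g : ι → ℝ}
    (hh : IsElementary U h) (hgU : g ∈ U) (hgh : support g ⊆ support h) :
    ∃ a : ℝ, g = a • h := by
  obtain ⟨j, hj⟩ := Function.ne_iff.1 hh.2.1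
  refine ⟨g j / h j, sub_eq_zero.1 (by_contra fun hw => ?_)⟩
  have hsupp : support (g - (g j / h j) • h) ⊆ support h :=
    (support_sub _ _).trans (Set.union_subset hgh (support_const_smul_subset _ _))
  have hwj : (g - (g j / h j) • h) j = 0 := by simp [div_mul_cancel₀ _ hj]
  have hsupp_eq := hh.2.2 _ (U.sub_mem hgU (U.smul_mem _ hh.1)) hw hsupp
  exact (hsupp_eq ▸ hj : j ∈ support (g - (g j / h j) • h)) hwj

theorem IsElementary.isCircuit {U : Submodule ℝ (ι → ℝ)} {h : ι → ℝ} (hh : IsElementary U h) :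
    IsCircuit U (support h) := by
  refine ⟨?_, fun C hC => ?_⟩
  · have : U ⊓ coordSubspace (support h) = Submodule.span ℝ {h} := by
      refine le_antisymm (fun g hg => ?_) ?_
      · obtain ⟨a, rfl⟩ := hh.eq_smul_of_support_subset hg.1
          (mem_coordSubspace_iff_support_subset.1 hg.2)
        exact Submodule.smul_mem _ a (Submodule.mem_span_singleton_self h)
      · rw [Submodule.span_le, Set.singleton_subset_iff]
        exact ⟨hh.1, mem_coordSubspace_iff_support_subset.2 subset_rfl⟩
    rw [this, finrank_span_singleton hh.2.1]
  · have : U ⊓ coordSubspace C = ⊥ := by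
      refine (Submodule.eq_bot_iff _).2 fun x hx => by_contra fun hx0 => ?_
      have hxC := mem_coordSubspace_iff_support_subset.1 hx.2
      exact hC.2 ((hh.2.2 x hx.1 hx0 (hxC.trans hC.1)) ▸ hxC)
    rw [this, finrank_bot]
    exact zero_ne_one

noncomputable def imbalance (g : ι → ℝ) : ℝ :=
  sSup ((fun i => |g i|) '' support g) / sInf ((fun i => |g i|) '' support g)

open scoped Pointwise in
theorem imbalance_smul {a : ℝ} (ha : a ≠ 0) (g : ι → ℝ) : imbalance (a • g) = imbalance g := by
  have himage : (fun i => |(a • g) i|) '' support g = |a| • ((fun i => |g i|) '' support g) := by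
    rw [← Set.image_smul, Set.image_image]
    exact Set.image_congr fun i _ => by simp [abs_mul]
  rw [imbalance, support_const_smul_of_ne_zero a g ha, himage, Real.sSup_smul_of_nonneg
    (abs_nonneg a), Real.sInf_smul_of_nonneg (abs_nonneg a), smul_eq_mul, smul_eq_mul,
    mul_div_mul_left _ _ (abs_ne_zero.2 ha), imbalance]

/-- `W ∩ ℝ^n_C` is a line and `imbalance` is invariant under scaling. -/
theorem IsCircuit.imbalance_subsingleton {W : Submodule ℝ (ι → ℝ)} {C : Set ι}
    (hC : IsCircuit W C) : (imbalance '' {g | g ∈ W ⊓ coordSubspace C ∧ g ≠ 0}).Subsingleton := by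
  obtain ⟨v, -, hv⟩ := finrank_eq_one_iff'.1 hC.1
  have key : ∀ g ∈ {g | g ∈ W ⊓ coordSubspace C ∧ g ≠ 0}, imbalance g = imbalance (v : ι → ℝ) := by
    rintro g ⟨hg, hg0⟩
    obtain ⟨a, ha⟩ := hv ⟨g, hg⟩
    have hg' : g = a • (v : ι → ℝ) := (congrArg Subtype.val ha).symm
    rw [hg', imbalance_smul (by rintro rfl; simp [hg'] at hg0)]
  rintro _ ⟨g, hg, rfl⟩ _ ⟨g', hg', rfl⟩
  rw [key g hg, key g' hg']

theorem exists_mem_support_subset_apply_eq_zero {U : Submodule ℝ (ι → ℝ)} {x : ι → ℝ}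
    (hxU : x ∈ U) (hx : ¬IsElementary U x) {i : ι} (hi : x i ≠ 0) :
    ∃ g ∈ U, g ≠ 0 ∧ support g ⊆ support x ∧ g i = 0 := by
  have hx0 : x ≠ 0 := fun h => hi (by simp [h])
  obtain ⟨g, hgU, hg0, hgx, hne⟩ : ∃ g ∈ U, g ≠ 0 ∧ support g ⊆ support x ∧
      support g ≠ support x := by
    simpa [IsElementary, hxU, hx0] using hx
  obtain ⟨k, hxk, hgk⟩ : ∃ k, x k ≠ 0 ∧ g k = 0 := by
    by_contra! h
    exact hne (hgx.antisymm h)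
  by_cases hgi : g i = 0
  · exact ⟨g, hgU, hg0, hgx, hgi⟩
  refine ⟨x - (x i / g i) • g, U.sub_mem hxU (U.smul_mem _ hgU), fun h => hxk ?_,
    (support_sub _ _).trans
      (Set.union_subset subset_rfl ((support_const_smul_subset _ _).trans hgx)),
    by simp [hgi]⟩
  simpa [hgk] using congrFun h k

section

variable [Finite ι]

open Filter Topology in
theorem exists_pos_forall_nonneg_sub_mul {s h : ι → ℝ} (hs : ∀ k, 0 ≤ s k)
    (hpos : ∀ k, 0 < h k → 0 < s k) : ∃ α > 0, ∀ k, 0 ≤ s k - α * h k := by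
  have hev : ∀ k, ∀ᶠ α in 𝓝[>] (0 : ℝ), 0 ≤ s k - α * h k := fun k => by
    rcases le_or_gt (h k) 0 with hk | hk
    · filter_upwards [self_mem_nhdsWithin] with α (hα : 0 < α)
      nlinarith [hs k]
    · have hlim : Tendsto (fun α => s k - α * h k) (𝓝[>] 0) (𝓝 (s k)) :=
        ((by fun_prop : Continuous fun α : ℝ => s k - α * h k).tendsto' 0 (s k)
          (by simp)).mono_left nhdsWithin_le_nhds
      exact (hlim.eventually (Ioi_mem_nhds (hpos k hk))).mono fun α hα => le_of_lt hα
  exact ((eventually_all.2 hev).and self_mem_nhdsWithin).exists.imp fun α h => ⟨h.2, h.1⟩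

/-- Moving from `x` along `-g` until the first coordinate of `support g` vanishes keeps the
signs of `x`. -/
theorem exists_signConsistent_sub_smul {x g : ι → ℝ} (hg : g ≠ 0) (hgx : support g ⊆ support x) :
    ∃ t : ℝ, ∃ m ∈ support g, x m - t * g m = 0 ∧ SignConsistent (x - t • g) x := by
  obtain ⟨m, hm, hmin⟩ := (support g).exists_min_image (fun k => |x k / g k|) (Set.toFinite _)
    (support_nonempty_iff.2 hg)
  refine ⟨x m / g m, m, hm, by rw [div_mul_cancel₀ _ hm, sub_self], fun k => ?_, fun k hk => ?_⟩
  · rcases eq_or_ne (g k) 0 with hgk | hgk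
    · simp [hgk, mul_self_nonneg]
    have hle : |x m / g m| * |g k| ≤ |x k| :=
      calc _ ≤ |x k / g k| * |g k| :=
            mul_le_mul_of_nonneg_right (hmin k hgk) (abs_nonneg _)
        _ = |x k| := by rw [abs_div, div_mul_cancel₀ _ (abs_ne_zero.2 hgk)]
    have : |x m / g m * g k * x k| ≤ x k * x k := by
      rw [abs_mul, abs_mul, ← abs_mul_abs_self (x k)]
      exact mul_le_mul_of_nonneg_right hle (abs_nonneg _)
    simp only [Pi.sub_apply, Pi.smul_apply, smul_eq_mul]
    nlinarith [le_abs_self (x m / g m * g k * x k)]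
  · have hgk : g k = 0 := by_contra fun h => hgx h hk
    simp [hk, hgk]

theorem exists_isElementary_signConsistent {U : Submodule ℝ (ι → ℝ)} {x : ι → ℝ}
    (hxU : x ∈ U) {i : ι} (hi : x i ≠ 0) :
    ∃ h, IsElementary U h ∧ SignConsistent h x ∧ h i ≠ 0 := by
  by_cases hx : IsElementary U x
  · exact ⟨x, hx, .refl x, hi⟩
  obtain ⟨g, hgU, hg0, hgx, hgi⟩ := exists_mem_support_subset_apply_eq_zero hxU hx hi
  obtain ⟨t, m, hm, hxm, hconf⟩ := exists_signConsistent_sub_smul hg0 hgx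
  have hlt : support (x - t • g) ⊂ support x :=
    ⟨hconf.support_subset, fun h => h (hgx hm) hxm⟩
  have : (support (x - t • g)).ncard < (support x).ncard := Set.ncard_lt_ncard hlt
  obtain ⟨h, hel, hhconf, hhi⟩ :=
    exists_isElementary_signConsistent (U.sub_mem hxU (U.smul_mem t hgU))
      (i := i) (by simpa [hgi] using hi)
  exact ⟨h, hel, hhconf.trans hconf, hhi⟩
termination_by (support x).ncard

theorem bddAbove_kappa_set (W : Submodule ℝ (ι → ℝ)) :
    BddAbove ({1} ∪ {r | ∃ C : Set ι, IsCircuit W C ∧ ∃ g ∈ W, g ≠ 0 ∧ {i | g i ≠ 0} = C ∧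
      r = sSup ((fun i => |g i|) '' C) / sInf ((fun i => |g i|) '' C)}) := by
  refine bddAbove_singleton.union (Set.Finite.bddAbove ?_)
  refine ((Set.toFinite {C | IsCircuit W C}).biUnion
    fun C hC => (IsCircuit.imbalance_subsingleton hC).finite).subset ?_
  rintro r ⟨C, hC, g, hgW, hg0, rfl, rfl⟩
  exact Set.mem_biUnion hC
    ⟨g, ⟨⟨hgW, mem_coordSubspace_iff_support_subset.2 subset_rfl⟩, hg0⟩, rfl⟩

theorem one_le_kappa (W : Submodule ℝ (ι → ℝ)) : 1 ≤ kappa W :=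
  le_csSup (bddAbove_kappa_set W) (Or.inl rfl)

theorem IsElementary.imbalance_le_kappa {W : Submodule ℝ (ι → ℝ)} {g : ι → ℝ}
    (hg : IsElementary W g) : imbalance g ≤ kappa W :=
  le_csSup (bddAbove_kappa_set W) (Or.inr ⟨_, hg.isCircuit, g, hg.1, hg.2.1, rfl, rfl⟩)

theorem IsElementary.abs_le_kappa_mul_abs {W : Submodule ℝ (ι → ℝ)} {g : ι → ℝ}
    (hg : IsElementary W g) (a : ι) {b : ι} (hb : g b ≠ 0) : |g a| ≤ kappa W * |g b| := by
  set S := (fun i => |g i|) '' support g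
  have hS : S.Finite := (Set.toFinite _).image _
  have hne : S.Nonempty := ⟨_, b, hb, rfl⟩
  have hinf : 0 < sInf S := by
    obtain ⟨k, hk, hkS⟩ := hne.csInf_mem hS
    exact hkS ▸ abs_pos.2 hk
  have hsup : |g a| ≤ sSup S := by
    rcases eq_or_ne (g a) 0 with ha | ha
    · rw [ha, abs_zero]
      exact (abs_nonneg _).trans (le_csSup hS.bddAbove ⟨b, hb, rfl⟩)
    · exact le_csSup hS.bddAbove ⟨a, ha, rfl⟩
  calc |g a| ≤ sSup S := hsup
    _ = imbalance g * sInf S := (div_mul_cancel₀ _ hinf.ne').symm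
    _ ≤ kappa W * sInf S := mul_le_mul_of_nonneg_right hg.imbalance_le_kappa hinf.le
    _ ≤ kappa W * |g b| := mul_le_mul_of_nonneg_left (csInf_le hS.bddBelow ⟨b, hb, rfl⟩)
        (zero_le_one.trans (one_le_kappa W))

end

variable [Fintype ι]

theorem mem_orthComp {W : Submodule ℝ (ι → ℝ)} {y : ι → ℝ} :
    y ∈ orthComp W ↔ ∀ x ∈ W, ∑ i, x i * y i = 0 :=
  Iff.rfl

/-- `(W ∩ ℝ^n_A)^⊥ = W^⊥ + (ℝ^n_A)^⊥`, computed in `EuclideanSpace`. -/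
theorem exists_mem_orthComp_eqOn_single [DecidableEq ι] {W : Submodule ℝ (ι → ℝ)} {A : Set ι}
    {i : ι} (hW : ∀ x ∈ W, support x ⊆ A → x i = 0) :
    ∃ w ∈ orthComp W, Set.EqOn w (Pi.single i 1) A := by
  let e : (ι → ℝ) ≃ₗ[ℝ] EuclideanSpace ℝ ι := (EuclideanSpace.equiv ι ℝ).symm.toLinearEquiv
  have he : ∀ x y, inner ℝ (e x) (e y) = ∑ k, x k * y k := fun x y => by
    simp [e, PiLp.inner_apply, mul_comm]
  set V := W.map e.toLinearMap
  set K := (coordSubspace A).map e.toLinearMap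
  have hsingle : e (Pi.single i 1) ∈ (V ⊓ K)ᗮ := by
    rintro _ ⟨⟨x, hxW, rfl⟩, ⟨x', hx'A, hx'⟩⟩
    rw [e.injective hx'] at hx'A
    simp [he, Pi.single_apply, hW x hxW (mem_coordSubspace_iff_support_subset.1 hx'A)]
  have hdual : (V ⊓ K)ᗮ = Vᗮ ⊔ Kᗮ := by
    rw [← Submodule.orthogonal_orthogonal (Vᗮ ⊔ Kᗮ), ← Submodule.inf_orthogonal,
      V.orthogonal_orthogonal, K.orthogonal_orthogonal]
  obtain ⟨v, hv, z, hz, hvz⟩ := Submodule.mem_sup.1 (hdual ▸ hsingle)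
  refine ⟨e.symm v, fun x hx => ?_, fun k hk => ?_⟩
  · rw [← he, LinearEquiv.apply_symm_apply]
    exact hv _ ⟨x, hx, rfl⟩
  · have hzk : z k = 0 := by
      have hsk : Pi.single k 1 ∈ coordSubspace A :=
        mem_coordSubspace_iff_support_subset.2 (by simpa [Pi.support_single_of_ne] using hk)
      simpa [e, EuclideanSpace.inner_single_left] using hz _ ⟨_, hsk, rfl⟩
    have hvzk : v k + z k = (Pi.single i 1 : ι → ℝ) k := by
      simpa [e, Pi.single_apply] using congrArg (fun u : EuclideanSpace ℝ ι => u k) hvz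
    change v k = _
    linarith

/-- The exchange step behind `κ_{W^⊥} = κ_W`. If it failed, the functional `x ↦ x i` would vanish
on `W ∩ ℝ^n_A`, producing a vector of `W^⊥` whose support lies strictly inside that of `h`. -/
theorem IsElementary.exists_isElementary_of_orthComp {W : Submodule ℝ (ι → ℝ)} {h : ι → ℝ}
    (hh : IsElementary (orthComp W) h) {i j : ι} (hi : h i ≠ 0) (hj : h j ≠ 0) (hji : j ≠ i) :
    ∃ g, IsElementary W g ∧ g i ≠ 0 ∧ support g ∩ support h ⊆ {i, j} := by
  classical
  set A := (support h)ᶜ ∪ {i, j}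
  suffices ∃ x ∈ W, support x ⊆ A ∧ x i ≠ 0 by
    obtain ⟨x, hxW, hxA, hxi⟩ := this
    obtain ⟨g, hg, hgx, hgi⟩ := exists_isElementary_signConsistent hxW hxi
    refine ⟨g, hg, hgi, fun k ⟨hgk, hhk⟩ => ?_⟩
    simpa [A, hhk] using hxA (hgx.support_subset hgk)
  by_contra! hW
  obtain ⟨w, hw, hwA⟩ := exists_mem_orthComp_eqOn_single hW
  have hwi : w i = 1 := by simpa using hwA (Or.inr (Set.mem_insert i _))
  have hwj : w j = 0 := by simpa [hji] using hwA (Or.inr (by simp : j ∈ ({i, j} : Set ι)))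
  have hwh : support w ⊆ support h := fun k hwk => by_contra fun hhk => hwk <| by
    simpa [show k ≠ i by rintro rfl; exact hhk hi] using hwA (Or.inl hhk)
  have hw0 : w ≠ 0 := fun h0 => by simp [h0] at hwi
  exact (hh.2.2 w hw hw0 hwh ▸ hj : j ∈ support w) hwj

theorem IsElementary.abs_le_kappa_mul_abs_of_orthComp {W : Submodule ℝ (ι → ℝ)} {h : ι → ℝ}
    (hh : IsElementary (orthComp W) h) (j : ι) {i : ι} (hi : h i ≠ 0) :
    |h j| ≤ kappa W * |h i| := by
  rcases eq_or_ne j i with rfl | hji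
  · exact le_mul_of_one_le_left (abs_nonneg _) (one_le_kappa W)
  rcases eq_or_ne (h j) 0 with hj | hj
  · rw [hj, abs_zero]
    exact mul_nonneg (zero_le_one.trans (one_le_kappa W)) (abs_nonneg _)
  obtain ⟨g, hg, hgi, hgh⟩ := hh.exists_isElementary_of_orthComp hi hj hji
  have horth : g i * h i + g j * h j = 0 := by
    rw [← Fintype.sum_eq_add (f := fun k => g k * h k) i j hji.symm
      fun k hk => by_contra fun hne => ?_]
    · exact mem_orthComp.1 hh.1 g hg.1
    · have := hgh ⟨left_ne_zero_of_mul hne, right_ne_zero_of_mul hne⟩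
      simp_all
  have hgj : g j ≠ 0 := fun hgj => by simp_all
  have hprod : |g j| * |h j| = |g i| * |h i| := by
    rw [← abs_mul, ← abs_mul, eq_neg_of_add_eq_zero_right horth, abs_neg]
  refine le_of_mul_le_mul_left ?_ (abs_pos.2 hgj)
  calc |g j| * |h j| = |g i| * |h i| := hprod
    _ ≤ kappa W * |g j| * |h i| :=
        mul_le_mul_of_nonneg_right (hg.abs_le_kappa_mul_abs i hgj) (abs_nonneg _)
    _ = |g j| * (kappa W * |h i|) := by ring

theorem norm1_nonneg (x : ι → ℝ) : 0 ≤ norm1 x :=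
  Finset.sum_nonneg fun i _ => abs_nonneg (x i)

theorem abs_sum_mul_le_norm1_mul {a h : ι → ℝ} {M : ℝ} (hM : ∀ k, |h k| ≤ M) :
    |∑ k, a k * h k| ≤ norm1 a * M :=
  calc |∑ k, a k * h k| ≤ ∑ k, |a k| * M :=
        (Finset.abs_sum_le_sum_abs _ _).trans <| Finset.sum_le_sum fun k _ => by
          rw [abs_mul]
          exact mul_le_mul_of_nonneg_left (hM k) (abs_nonneg _)
    _ = norm1 a * M := by rw [norm1, Finset.sum_mul]

theorem IsOptimalPair.mul_apply_eq_zero {W : Submodule ℝ (ι → ℝ)} {d c x s : ι → ℝ}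
    (hopt : IsOptimalPair W d c x s) (k : ι) : x k * s k = 0 :=
  (Finset.sum_eq_zero_iff_of_nonneg fun k _ => mul_nonneg (hopt.1.2 k) (hopt.2.1.2 k)).1
    hopt.2.2 k (Finset.mem_univ k)

theorem IsOptimalPair.mul_le_sum_mul {W : Submodule ℝ (ι → ℝ)} {d c x s h : ι → ℝ}
    (hopt : IsOptimalPair W d c x s) (hneg : ∀ k, h k < 0 → 0 < s k) (i : ι) :
    x i * h i ≤ ∑ k, x k * h k := by
  refine Finset.single_le_sum (f := fun k => x k * h k) (fun k _ => ?_) (Finset.mem_univ i)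
  rcases le_or_gt 0 (h k) with hk | hk
  · exact mul_nonneg (hopt.1.2 k) hk
  · simp [(mul_eq_zero.1 (hopt.mul_apply_eq_zero k)).resolve_right (hneg k hk).ne']

/-- `s - α • h` is dual feasible for small `α > 0`. -/
theorem sum_mul_nonpos_of_dual_optimal {W : Submodule ℝ (ι → ℝ)} {c d s h : ι → ℝ}
    (hs : DualFeasible W c s)
    (hopt : ∀ s', DualFeasible W c s' → ∑ i, d i * (c i - s' i) ≤ ∑ i, d i * (c i - s i))
    (hh : h ∈ orthComp W) (hpos : ∀ k, 0 < h k → 0 < s k) : ∑ i, d i * h i ≤ 0 := by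
  obtain ⟨α, hα, hαs⟩ := exists_pos_forall_nonneg_sub_mul hs.2 hpos
  have hfeas : DualFeasible W c (s - α • h) := by
    refine ⟨?_, fun k => by simpa using hαs k⟩
    convert (orthComp W).sub_mem hs.1 ((orthComp W).smul_mem α hh) using 1
    abel
  have hobj : ∑ i, d i * (c i - (s - α • h) i) = ∑ i, d i * (c i - s i) + α * ∑ i, d i * h i := by
    simp only [Pi.sub_apply, Pi.smul_apply, smul_eq_mul, Finset.mul_sum, ← Finset.sum_add_distrib]
    exact Finset.sum_congr rfl fun i _ => by ring
  have := hopt _ hfeas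
  nlinarith

theorem dual_optimal_vanishing_general {n : ℕ} (W : Submodule ℝ (Fin n → ℝ))
    (c d dt xt s : Fin n → ℝ)
    (hopt : IsOptimalPair W dt c xt s)
    (sstar : Fin n → ℝ)
    (hsfeas : DualFeasible W c sstar)
    (hsopt : ∀ s' : Fin n → ℝ, DualFeasible W c s' →
      ∑ i, d i * (c i - s' i) ≤ ∑ i, d i * (c i - sstar i)) :
    ∀ i, (kappa W + 1) * norm1 (d - dt) < xt i → sstar i = 0 := by
  intro i hi
  by_contra hsi
  have hxti : 0 < xt i :=
    (mul_nonneg (by linarith [one_le_kappa W]) (norm1_nonneg _)).trans_lt hi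
  have hsi0 : s i = 0 := (mul_eq_zero.1 (hopt.mul_apply_eq_zero i)).resolve_left hxti.ne'
  have hy : sstar - s ∈ orthComp W := by
    simpa using (orthComp W).sub_mem hsfeas.1 hopt.2.1.1
  obtain ⟨h, hh, hhy, hhi⟩ := exists_isElementary_signConsistent hy (i := i) (by simpa [hsi0])
  have hpos : ∀ k, 0 < h k → s k < sstar k := fun k hk => sub_pos.1 (hhy.pos_of_pos hk)
  have hneg : ∀ k, h k < 0 → sstar k < s k := fun k hk => sub_neg.1 (hhy.neg_of_neg hk)
  have hhi_pos : 0 < h i := hhi.lt_or_gt.resolve_left fun hhi_neg => by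
    linarith [hneg i hhi_neg, hsfeas.2 i]
  have hxh := hopt.mul_le_sum_mul (fun k hk => by linarith [hneg k hk, hsfeas.2 k]) i
  have hxd : ∑ k, (xt - dt) k * h k = 0 := mem_orthComp.1 hh.1 _ hopt.1.1
  have hd := sum_mul_nonpos_of_dual_optimal hsfeas hsopt hh.1 fun k hk => by
    linarith [hpos k hk, hopt.2.1.2 k]
  have hbound := abs_sum_mul_le_norm1_mul (a := d - dt)
    fun k => hh.abs_le_kappa_mul_abs_of_orthComp k hhi
  simp only [Pi.sub_apply, sub_mul, Finset.sum_sub_distrib, abs_of_pos hhi_pos] at hxd hbound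
  nlinarith [neg_abs_le (∑ k, d k * h k - ∑ k, dt k * h k), norm1_nonneg (d - dt)]

/-- coordinates of `x̃` exceeding `(κ_W + 1)‖d − d̃‖₁` vanish in every
dual optimal solution of Primal-Dual(W,d,c). -/
theorem dual_optimal_vanishing {n : ℕ} (W : Submodule ℝ (Fin n → ℝ))
    (c d dt xt s : Fin n → ℝ)
    (hopt : IsOptimalPair W dt c xt s)
    (hfeas : ∃ x : Fin n → ℝ, x - d ∈ W ∧ ∀ i, 0 ≤ x i)
    (sstar : Fin n → ℝ)
    (hsfeas : DualFeasible W c sstar)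
    (hsopt : ∀ s' : Fin n → ℝ, DualFeasible W c s' →
      ∑ i, d i * (c i - s' i) ≤ ∑ i, d i * (c i - sstar i)) :
    ∀ i, (kappa W + 1) * norm1 (d - dt) < xt i → sstar i = 0 :=
  dual_optimal_vanishing_general W c d dt xt s hopt sstar hsfeas hsopt
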